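/- arXiv:2405.09210 — 4 statements merged into one kernel-verified Lean document; each statement's English description precedes it below -/
import Mathlib

section
/- Let B be a commutative ring and let g be an invertible 2×2 matrix over B. If for every diagonal invertible 2×2 matrix t over any commutative B-algebra, the conjugate g·t·g⁻¹ is diagonal, then g11·g12 = 0 and g21·g22 = 0; in particular this holds if and only if g is either diagonal or antidiagonal when B has no nontrivial idempotents killing entries. -/
open Matrix LaurentPolynomial

/-- If `g ∈ GL₂(B)` and for every commutative `B`-algebra `C` and every
invertible diagonal `2×2` matrix `t` over `C` the conjugate `g·t·g⁻¹` is diagonal,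
then `g11·g12 = 0` and `g21·g22 = 0`. -/
theorem normalizes_torus_entries (B : Type) [CommRing B]
    (g : GL (Fin 2) B)
    (h : ∀ (C : Type) [CommRing C] [Algebra B C] (t : GL (Fin 2) C),
      (t : Matrix (Fin 2) (Fin 2) C) 0 1 = 0 → (t : Matrix (Fin 2) (Fin 2) C) 1 0 = 0 →
      (letI gC : GL (Fin 2) C :=
        Units.map (RingHom.mapMatrix (algebraMap B C)).toMonoidHom g
      ((gC * t * gC⁻¹ : GL (Fin 2) C) : Matrix (Fin 2) (Fin 2) C) 0 1 = 0 ∧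
      ((gC * t * gC⁻¹ : GL (Fin 2) C) : Matrix (Fin 2) (Fin 2) C) 1 0 = 0)) :
    (g : Matrix (Fin 2) (Fin 2) B) 0 0 * (g : Matrix (Fin 2) (Fin 2) B) 0 1 = 0 ∧
    (g : Matrix (Fin 2) (Fin 2) B) 1 0 * (g : Matrix (Fin 2) (Fin 2) B) 1 1 = 0 := by
  set L := LaurentPolynomial B with hL
  have hTT : (T 1 : L) * T (-1) = 1 := by rw [← T_add]; norm_num
  set t : GL (Fin 2) L :=
    ⟨!![T 1, 0; 0, T (-1)], !![T (-1), 0; 0, T 1],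
      by ext i j; fin_cases i <;> fin_cases j <;>
        simp [Matrix.mul_apply, Fin.sum_univ_two, hTT, mul_comm],
      by ext i j; fin_cases i <;> fin_cases j <;>
        simp [Matrix.mul_apply, Fin.sum_univ_two, hTT, mul_comm]⟩ with ht
  have ht01 : (t : Matrix (Fin 2) (Fin 2) L) 0 1 = 0 := by simp [ht]
  have ht10 : (t : Matrix (Fin 2) (Fin 2) L) 1 0 = 0 := by simp [ht]
  obtain ⟨h01, h10⟩ := h L t ht01 ht10
  set gC : GL (Fin 2) L := Units.map (RingHom.mapMatrix (algebraMap B L)).toMonoidHom g with hgC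
  have key : ((gC * t * gC⁻¹ : GL (Fin 2) L) : Matrix (Fin 2) (Fin 2) L) * gC
      = (gC : Matrix (Fin 2) (Fin 2) L) * t := by
    have h2 : (gC * t * gC⁻¹) * gC = gC * t := by group
    calc ((gC * t * gC⁻¹ : GL (Fin 2) L) : Matrix (Fin 2) (Fin 2) L) * gC
        = (((gC * t * gC⁻¹) * gC : GL (Fin 2) L) : Matrix (Fin 2) (Fin 2) L) := rfl
      _ = _ := by rw [h2]; rfl
  set M := ((gC * t * gC⁻¹ : GL (Fin 2) L) : Matrix (Fin 2) (Fin 2) L) with hM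
  set G := (gC : Matrix (Fin 2) (Fin 2) L) with hG
  have e00 : M 0 0 * G 0 0 = G 0 0 * T 1 := by
    have := congrFun (congrFun key 0) 0
    simpa [Matrix.mul_apply, Fin.sum_univ_two, h01, ht] using this
  have e01 : M 0 0 * G 0 1 = G 0 1 * T (-1) := by
    have := congrFun (congrFun key 0) 1
    simpa [Matrix.mul_apply, Fin.sum_univ_two, h01, ht] using this
  have e10 : M 1 1 * G 1 0 = G 1 0 * T 1 := by
    have := congrFun (congrFun key 1) 0
    simpa [Matrix.mul_apply, Fin.sum_univ_two, h10, ht] using this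
  have e11 : M 1 1 * G 1 1 = G 1 1 * T (-1) := by
    have := congrFun (congrFun key 1) 1
    simpa [Matrix.mul_apply, Fin.sum_univ_two, h10, ht] using this
  have hGdef : ∀ i j, G i j = LaurentPolynomial.C ((g : Matrix (Fin 2) (Fin 2) B) i j) := by
    intro i j; rfl
  have coeff_zero : ∀ b : B,
      (LaurentPolynomial.C b : L) * (T 1 - T (-1)) = 0 → b = 0 := by
    intro b hb
    rw [mul_sub, ← single_eq_C_mul_T, ← single_eq_C_mul_T, sub_eq_zero] at hb
    rcases AddMonoidAlgebra.single_inj.mp hb with ⟨h1, -⟩ | ⟨h1, -⟩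
    · omega
    · exact h1
  constructor
  · apply coeff_zero
    rw [RingHom.map_mul, ← hGdef 0 0, ← hGdef 0 1]
    linear_combination G 0 0 * e01 - G 0 1 * e00
  · apply coeff_zero
    rw [RingHom.map_mul, ← hGdef 1 0, ← hGdef 1 1]
    linear_combination G 1 0 * e11 - G 1 1 * e10
end

section
/- Let B be a commutative ring. The set N(B) of invertible 2×2 matrices g over B with g11·g12 = 0 and g21·g22 = 0 (and additionally g11·g21 = 0 and g12·g22 = 0) forms a subgroup of GL₂(B), and the subgroup T(B) of invertible diagonal matrices is a normal subgroup of N(B). -/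
open Matrix

section Aux
variable {B : Type} [CommRing B]

lemma glinv_apply (g : GL (Fin 2) B) (i j : Fin 2) :
    ((g⁻¹ : GL (Fin 2) B) : Matrix (Fin 2) (Fin 2) B) i j
      = Ring.inverse (Matrix.det (g : Matrix (Fin 2) (Fin 2) B)) *
        (Matrix.adjugate (g : Matrix (Fin 2) (Fin 2) B)) i j := by
  rw [Matrix.coe_units_inv, Matrix.inv_def]
  rfl

lemma glinv00 (g : GL (Fin 2) B) :
    ((g⁻¹ : GL (Fin 2) B) : Matrix (Fin 2) (Fin 2) B) 0 0
      = Ring.inverse (Matrix.det (g : Matrix (Fin 2) (Fin 2) B)) *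
        (g : Matrix (Fin 2) (Fin 2) B) 1 1 := by
  simp [glinv_apply, Matrix.adjugate_fin_two]

lemma glinv01 (g : GL (Fin 2) B) :
    ((g⁻¹ : GL (Fin 2) B) : Matrix (Fin 2) (Fin 2) B) 0 1
      = Ring.inverse (Matrix.det (g : Matrix (Fin 2) (Fin 2) B)) *
        (-(g : Matrix (Fin 2) (Fin 2) B) 0 1) := by
  simp [glinv_apply, Matrix.adjugate_fin_two]

lemma glinv10 (g : GL (Fin 2) B) :
    ((g⁻¹ : GL (Fin 2) B) : Matrix (Fin 2) (Fin 2) B) 1 0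
      = Ring.inverse (Matrix.det (g : Matrix (Fin 2) (Fin 2) B)) *
        (-(g : Matrix (Fin 2) (Fin 2) B) 1 0) := by
  simp [glinv_apply, Matrix.adjugate_fin_two]

lemma glinv11 (g : GL (Fin 2) B) :
    ((g⁻¹ : GL (Fin 2) B) : Matrix (Fin 2) (Fin 2) B) 1 1
      = Ring.inverse (Matrix.det (g : Matrix (Fin 2) (Fin 2) B)) *
        (g : Matrix (Fin 2) (Fin 2) B) 0 0 := by
  simp [glinv_apply, Matrix.adjugate_fin_two]

lemma glmul_apply (g h : GL (Fin 2) B) (i j : Fin 2) :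
    ((g * h : GL (Fin 2) B) : Matrix (Fin 2) (Fin 2) B) i j
      = (g : Matrix (Fin 2) (Fin 2) B) i 0 * (h : Matrix (Fin 2) (Fin 2) B) 0 j
        + (g : Matrix (Fin 2) (Fin 2) B) i 1 * (h : Matrix (Fin 2) (Fin 2) B) 1 j := by
  simp [Matrix.mul_apply, Fin.sum_univ_two]

end Aux

/-- The set `N(B)` of invertible `2×2` matrices with
`g11·g12 = g21·g22 = g11·g21 = g12·g22 = 0` is a subgroup of `GL₂(B)`, and the
subgroup `T(B)` of invertible diagonal matrices is a normal subgroup of `N(B)`. -/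
theorem schematic_normalizer_is_subgroup (B : Type) [CommRing B] :
    ∃ Ngrp : Subgroup (GL (Fin 2) B),
      (Ngrp : Set (GL (Fin 2) B)) =
        {g : GL (Fin 2) B |
          (g : Matrix (Fin 2) (Fin 2) B) 0 0 * (g : Matrix (Fin 2) (Fin 2) B) 0 1 = 0 ∧
          (g : Matrix (Fin 2) (Fin 2) B) 1 0 * (g : Matrix (Fin 2) (Fin 2) B) 1 1 = 0 ∧
          (g : Matrix (Fin 2) (Fin 2) B) 0 0 * (g : Matrix (Fin 2) (Fin 2) B) 1 0 = 0 ∧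
          (g : Matrix (Fin 2) (Fin 2) B) 0 1 * (g : Matrix (Fin 2) (Fin 2) B) 1 1 = 0} ∧
      ∃ Tgrp : Subgroup (GL (Fin 2) B),
        (Tgrp : Set (GL (Fin 2) B)) =
          {g : GL (Fin 2) B |
            (g : Matrix (Fin 2) (Fin 2) B) 0 1 = 0 ∧
            (g : Matrix (Fin 2) (Fin 2) B) 1 0 = 0} ∧
        Tgrp ≤ Ngrp ∧
        ∀ n ∈ Ngrp, ∀ t ∈ Tgrp, n * t * n⁻¹ ∈ Tgrp := by
  refine ⟨{
    carrier := {g : GL (Fin 2) B |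
      (g : Matrix (Fin 2) (Fin 2) B) 0 0 * (g : Matrix (Fin 2) (Fin 2) B) 0 1 = 0 ∧
      (g : Matrix (Fin 2) (Fin 2) B) 1 0 * (g : Matrix (Fin 2) (Fin 2) B) 1 1 = 0 ∧
      (g : Matrix (Fin 2) (Fin 2) B) 0 0 * (g : Matrix (Fin 2) (Fin 2) B) 1 0 = 0 ∧
      (g : Matrix (Fin 2) (Fin 2) B) 0 1 * (g : Matrix (Fin 2) (Fin 2) B) 1 1 = 0}
    one_mem' := by simp [Set.mem_setOf_eq, Matrix.one_apply]
    mul_mem' := by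
      rintro g h ⟨hg1, hg2, hg3, hg4⟩ ⟨hh1, hh2, hh3, hh4⟩
      simp only [Set.mem_setOf_eq, glmul_apply]
      refine ⟨?_, ?_, ?_, ?_⟩
      · linear_combination ((g : Matrix (Fin 2) (Fin 2) B) 0 0 * (g : Matrix (Fin 2) (Fin 2) B) 0 0) * hh1
          + ((g : Matrix (Fin 2) (Fin 2) B) 0 1 * (g : Matrix (Fin 2) (Fin 2) B) 0 1) * hh2
          + ((h : Matrix (Fin 2) (Fin 2) B) 0 0 * (h : Matrix (Fin 2) (Fin 2) B) 1 1
             + (h : Matrix (Fin 2) (Fin 2) B) 0 1 * (h : Matrix (Fin 2) (Fin 2) B) 1 0) * hg1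
      · linear_combination ((g : Matrix (Fin 2) (Fin 2) B) 1 0 * (g : Matrix (Fin 2) (Fin 2) B) 1 0) * hh1
          + ((g : Matrix (Fin 2) (Fin 2) B) 1 1 * (g : Matrix (Fin 2) (Fin 2) B) 1 1) * hh2
          + ((h : Matrix (Fin 2) (Fin 2) B) 0 0 * (h : Matrix (Fin 2) (Fin 2) B) 1 1
             + (h : Matrix (Fin 2) (Fin 2) B) 0 1 * (h : Matrix (Fin 2) (Fin 2) B) 1 0) * hg2
      · linear_combination ((h : Matrix (Fin 2) (Fin 2) B) 0 0 * (h : Matrix (Fin 2) (Fin 2) B) 0 0) * hg3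
          + ((h : Matrix (Fin 2) (Fin 2) B) 1 0 * (h : Matrix (Fin 2) (Fin 2) B) 1 0) * hg4
          + ((g : Matrix (Fin 2) (Fin 2) B) 0 0 * (g : Matrix (Fin 2) (Fin 2) B) 1 1
             + (g : Matrix (Fin 2) (Fin 2) B) 0 1 * (g : Matrix (Fin 2) (Fin 2) B) 1 0) * hh3
      · linear_combination ((h : Matrix (Fin 2) (Fin 2) B) 0 1 * (h : Matrix (Fin 2) (Fin 2) B) 0 1) * hg3
          + ((h : Matrix (Fin 2) (Fin 2) B) 1 1 * (h : Matrix (Fin 2) (Fin 2) B) 1 1) * hg4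
          + ((g : Matrix (Fin 2) (Fin 2) B) 0 0 * (g : Matrix (Fin 2) (Fin 2) B) 1 1
             + (g : Matrix (Fin 2) (Fin 2) B) 0 1 * (g : Matrix (Fin 2) (Fin 2) B) 1 0) * hh4
    inv_mem' := by
      rintro g ⟨hg1, hg2, hg3, hg4⟩
      simp only [Set.mem_setOf_eq, glinv00, glinv01, glinv10, glinv11]
      set e := Ring.inverse (Matrix.det (g : Matrix (Fin 2) (Fin 2) B)) with he
      refine ⟨?_, ?_, ?_, ?_⟩
      · linear_combination (-(e * e)) * hg4
      · linear_combination (-(e * e)) * hg3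
      · linear_combination (-(e * e)) * hg2
      · linear_combination (-(e * e)) * hg1 }, rfl, ?_⟩
  refine ⟨{
    carrier := {g : GL (Fin 2) B |
      (g : Matrix (Fin 2) (Fin 2) B) 0 1 = 0 ∧
      (g : Matrix (Fin 2) (Fin 2) B) 1 0 = 0}
    one_mem' := by simp [Set.mem_setOf_eq, Matrix.one_apply]
    mul_mem' := by
      rintro g h ⟨hg1, hg2⟩ ⟨hh1, hh2⟩
      simp [Set.mem_setOf_eq, glmul_apply, hg1, hg2, hh1, hh2]
    inv_mem' := by
      rintro g ⟨hg1, hg2⟩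
      simp [Set.mem_setOf_eq, glinv01, glinv10, hg1, hg2] }, rfl, ?_, ?_⟩
  · rintro g ⟨hg1, hg2⟩
    exact ⟨by rw [hg1, mul_zero], by rw [hg2, zero_mul], by rw [hg2, mul_zero], by rw [hg1, zero_mul]⟩
  · rintro n ⟨hn1, hn2, hn3, hn4⟩ t ⟨ht1, ht2⟩
    constructor
    · show ((n * t * n⁻¹ : GL (Fin 2) B) : Matrix (Fin 2) (Fin 2) B) 0 1 = 0
      rw [glmul_apply, glmul_apply, glmul_apply, glinv01, glinv11, ht1, ht2]
      linear_combination (Ring.inverse (Matrix.det (n : Matrix (Fin 2) (Fin 2) B)) *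
        ((t : Matrix (Fin 2) (Fin 2) B) 1 1 - (t : Matrix (Fin 2) (Fin 2) B) 0 0)) * hn1
    · show ((n * t * n⁻¹ : GL (Fin 2) B) : Matrix (Fin 2) (Fin 2) B) 1 0 = 0
      rw [glmul_apply, glmul_apply, glmul_apply, glinv00, glinv10, ht1, ht2]
      linear_combination (Ring.inverse (Matrix.det (n : Matrix (Fin 2) (Fin 2) B)) *
        ((t : Matrix (Fin 2) (Fin 2) B) 0 0 - (t : Matrix (Fin 2) (Fin 2) B) 1 1)) * hn2
end

section
/- Let B be a commutative ring and let N(B) ⊆ GL₂(B) be the subgroup of matrices g with g11·g12 = g21·g22 = g11·g21 = g12·g22 = 0. The map π_B : N(B) → Idem(B) sending g to (g11·g22)/det(g) is a group homomorphism onto the multiplicative group of idempotents e of B satisfying e·(1−e) = 0 with group law e ∗ f = e·f + (1−e)·(1−f), and its kernel is the diagonal torus T(B). -/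
section

variable {B : Type} [CommRing B]

/-- Membership in the schematic normalizer `N(B) ⊆ GL₂(B)`. -/
def inNormalizer (g : GL (Fin 2) B) : Prop :=
  (g : Matrix (Fin 2) (Fin 2) B) 0 0 * (g : Matrix (Fin 2) (Fin 2) B) 0 1 = 0 ∧
  (g : Matrix (Fin 2) (Fin 2) B) 1 0 * (g : Matrix (Fin 2) (Fin 2) B) 1 1 = 0 ∧
  (g : Matrix (Fin 2) (Fin 2) B) 0 0 * (g : Matrix (Fin 2) (Fin 2) B) 1 0 = 0 ∧
  (g : Matrix (Fin 2) (Fin 2) B) 0 1 * (g : Matrix (Fin 2) (Fin 2) B) 1 1 = 0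

/-- The map `π_B : N(B) → Idem(B)`, `g ↦ g11·g22/det(g)`. -/
noncomputable def piN (g : GL (Fin 2) B) : B :=
  (g : Matrix (Fin 2) (Fin 2) B) 0 0 * (g : Matrix (Fin 2) (Fin 2) B) 1 1 *
    Ring.inverse ((g : Matrix (Fin 2) (Fin 2) B).det)

end

/-- `π_B : N(B) → Idem(B)`, `g ↦ g11·g22/det(g)`, takes values in the
idempotents of `B`, is a homomorphism for the idempotent group law
`e ∗ f = e·f + (1−e)·(1−f)`, is surjective onto the idempotents, and its kernel
is the diagonal torus `T(B)`. -/
theorem piN_hom_onto_idempotents_with_kernel_torus (B : Type) [CommRing B] :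
    (∀ g : GL (Fin 2) B, inNormalizer g → IsIdempotentElem (piN g)) ∧
    (∀ g h : GL (Fin 2) B, inNormalizer g → inNormalizer h →
      piN (g * h) = piN g * piN h + (1 - piN g) * (1 - piN h)) ∧
    (∀ e : B, IsIdempotentElem e → ∃ g : GL (Fin 2) B, inNormalizer g ∧ piN g = e) ∧
    (∀ g : GL (Fin 2) B, inNormalizer g →
      (piN g = 1 ↔ ((g : Matrix (Fin 2) (Fin 2) B) 0 1 = 0 ∧
        (g : Matrix (Fin 2) (Fin 2) B) 1 0 = 0))) := by

  constructor
  · -- idempotency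
    rintro g ⟨hab, hcd, hac, hbd⟩
    set a := (g : Matrix (Fin 2) (Fin 2) B) 0 0
    set b := (g : Matrix (Fin 2) (Fin 2) B) 0 1
    set c := (g : Matrix (Fin 2) (Fin 2) B) 1 0
    set d := (g : Matrix (Fin 2) (Fin 2) B) 1 1
    have hU : IsUnit ((g : Matrix (Fin 2) (Fin 2) B).det) :=
      (Matrix.isUnit_iff_isUnit_det _).mp g.isUnit
    have hDi : (a * d - b * c) * Ring.inverse ((g : Matrix (Fin 2) (Fin 2) B).det) = 1 := by
      rw [← Matrix.det_fin_two]; exact Ring.mul_inverse_cancel _ hU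
    set i := Ring.inverse ((g : Matrix (Fin 2) (Fin 2) B).det)
    show a * d * i * (a * d * i) = a * d * i
    linear_combination (c * d * i ^ 2) * hab + (a * d * i) * hDi
  constructor
  · -- homomorphism
    rintro g h ⟨hab, hcd, hac, hbd⟩ ⟨hab', hcd', hac', hbd'⟩
    set a := (g : Matrix (Fin 2) (Fin 2) B) 0 0
    set b := (g : Matrix (Fin 2) (Fin 2) B) 0 1
    set c := (g : Matrix (Fin 2) (Fin 2) B) 1 0
    set d := (g : Matrix (Fin 2) (Fin 2) B) 1 1
    set a' := (h : Matrix (Fin 2) (Fin 2) B) 0 0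
    set b' := (h : Matrix (Fin 2) (Fin 2) B) 0 1
    set c' := (h : Matrix (Fin 2) (Fin 2) B) 1 0
    set d' := (h : Matrix (Fin 2) (Fin 2) B) 1 1
    have hU : IsUnit ((g : Matrix (Fin 2) (Fin 2) B).det) :=
      (Matrix.isUnit_iff_isUnit_det _).mp g.isUnit
    have hU' : IsUnit ((h : Matrix (Fin 2) (Fin 2) B).det) :=
      (Matrix.isUnit_iff_isUnit_det _).mp h.isUnit
    set i := Ring.inverse ((g : Matrix (Fin 2) (Fin 2) B).det) with hi
    set i' := Ring.inverse ((h : Matrix (Fin 2) (Fin 2) B).det) with hi'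
    have hDi : (a * d - b * c) * i = 1 := by
      rw [hi, ← Matrix.det_fin_two]; exact Ring.mul_inverse_cancel _ hU
    have hD'i' : (a' * d' - b' * c') * i' = 1 := by
      rw [hi', ← Matrix.det_fin_two]; exact Ring.mul_inverse_cancel _ hU'
    have hmul : ((g * h : GL (Fin 2) B) : Matrix (Fin 2) (Fin 2) B)
        = (g : Matrix (Fin 2) (Fin 2) B) * (h : Matrix (Fin 2) (Fin 2) B) := rfl
    have hinv : Ring.inverse (((g * h : GL (Fin 2) B) : Matrix (Fin 2) (Fin 2) B).det)
        = i * i' := by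
      rw [hmul, Matrix.det_mul]
      rw [Ring.mul_inverse_rev, ← hi, ← hi', mul_comm]
    have h00 : ((g * h : GL (Fin 2) B) : Matrix (Fin 2) (Fin 2) B) 0 0
        = a * a' + b * c' := by rw [hmul]; simp [Matrix.mul_apply, Fin.sum_univ_two]; rfl
    have h11 : ((g * h : GL (Fin 2) B) : Matrix (Fin 2) (Fin 2) B) 1 1
        = c * b' + d * d' := by rw [hmul]; simp [Matrix.mul_apply, Fin.sum_univ_two]; rfl
    show ((g * h : GL (Fin 2) B) : Matrix (Fin 2) (Fin 2) B) 0 0 *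
        ((g * h : GL (Fin 2) B) : Matrix (Fin 2) (Fin 2) B) 1 1 *
        Ring.inverse (((g * h : GL (Fin 2) B) : Matrix (Fin 2) (Fin 2) B).det)
        = a * d * i * (a' * d' * i') + (1 - a * d * i) * (1 - a' * d' * i')
    rw [h00, h11, hinv]
    linear_combination (a' * b' * i * i') * hac + (c' * d' * i * i') * hbd +
      (-(b' * c' * i')) * hDi + (1 - a * d * i) * hD'i'
  constructor
  · -- surjectivity
    intro e he
    have he' : e * e = e := he
    have hMM : (Matrix.of ![![e, 1 - e], ![1 - e, e]]) *
        (Matrix.of ![![e, 1 - e], ![1 - e, e]]) = 1 := by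
      ext i j
      fin_cases i <;> fin_cases j <;>
        simp [Matrix.mul_apply, Fin.sum_univ_two] <;>
      first
        | linear_combination he'
        | linear_combination (-1 : B) * he'
        | linear_combination (2 : B) * he'
        | linear_combination (-2 : B) * he'
        | linear_combination (4 : B) * he'
        | linear_combination (-4 : B) * he'
        | ring
    refine ⟨⟨Matrix.of ![![e, 1 - e], ![1 - e, e]],
      Matrix.of ![![e, 1 - e], ![1 - e, e]], hMM, hMM⟩, ?_, ?_⟩
    · refine ⟨?_, ?_, ?_, ?_⟩ <;> show _ * _ = (0 : B) <;>
        simp <;>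
      first
        | linear_combination he'
        | linear_combination (-1 : B) * he'
        | linear_combination (2 : B) * he'
        | linear_combination (-2 : B) * he'
        | linear_combination (4 : B) * he'
        | linear_combination (-4 : B) * he'
        | ring
    · have hdet : (Matrix.of ![![e, 1 - e], ![1 - e, e]] : Matrix (Fin 2) (Fin 2) B).det
          = 2 * e - 1 := by
        rw [Matrix.det_fin_two]
        show e * e - (1 - e) * (1 - e) = 2 * e - 1
        linear_combination (0 : B) * he'
      have hsq : (2 * e - 1) * (2 * e - 1) = 1 := by linear_combination (4 : B) * he'
      have hinv : Ring.inverse ((2 : B) * e - 1) = 2 * e - 1 := by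
        have : ((2 : B) * e - 1) = ((⟨2 * e - 1, 2 * e - 1, hsq, hsq⟩ : Bˣ) : B) := rfl
        rw [this, Ring.inverse_unit]; rfl
      show e * e * Ring.inverse
        ((Matrix.of ![![e, 1 - e], ![1 - e, e]] : Matrix (Fin 2) (Fin 2) B).det) = e
      rw [hdet, hinv]
      first
        | linear_combination (2 * e + 1) * he'
        | linear_combination he'
        | linear_combination (-1 : B) * he'
        | linear_combination (2 : B) * he'
        | linear_combination (-2 : B) * he'
        | linear_combination (4 : B) * he'
        | linear_combination (-4 : B) * he'
        | ring
  · -- kernel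
    rintro g ⟨hab, hcd, hac, hbd⟩
    set a := (g : Matrix (Fin 2) (Fin 2) B) 0 0
    set b := (g : Matrix (Fin 2) (Fin 2) B) 0 1
    set c := (g : Matrix (Fin 2) (Fin 2) B) 1 0
    set d := (g : Matrix (Fin 2) (Fin 2) B) 1 1
    have hU : IsUnit ((g : Matrix (Fin 2) (Fin 2) B).det) :=
      (Matrix.isUnit_iff_isUnit_det _).mp g.isUnit
    set i := Ring.inverse ((g : Matrix (Fin 2) (Fin 2) B).det) with hi
    have hDi : (a * d - b * c) * i = 1 := by
      rw [hi, ← Matrix.det_fin_two]; exact Ring.mul_inverse_cancel _ hU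
    constructor
    · intro h1
      have h1' : a * d * i = 1 := h1
      exact ⟨by linear_combination d * i * hab - b * h1',
        by linear_combination a * i * hcd - c * h1'⟩
    · rintro ⟨hb, hc⟩
      show a * d * i = 1
      linear_combination hDi + c * i * hb
end

section
/- Let k be a field, let R = k[t₁^{±1}, t₂^{±1}] × k[u₁^{±1}, u₂^{±1}] (the representing algebra k[N] of the schematic normalizer), and let d ≥ 1 and 0 ≤ i ≤ d with i ≠ d − i. Let W = k{v_i, v_{d−i}} be a 2-dimensional vector space with comodule map Δ(v_i) = (t₁^{d−i}t₂^{i}, 0) ⊗ v_i + (0, u₁^{d−i}u₂^{i}) ⊗ v_{d−i} and Δ(v_{d−i}) = (t₁^{i}t₂^{d−i}, 0) ⊗ v_{d−i} + (0, u₁^{i}u₂^{d−i}) ⊗ v_i. Then W has no 1-dimensional subcomodule; i.e., W is an irreducible R-comodule. -/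
open TensorProduct

/-- Over a field `k`, with `R = k[t₁^{±1},t₂^{±1}] × k[u₁^{±1},u₂^{±1}]`
(the representing algebra of the schematic normalizer `N`), the 2-dimensional comodule
`W = k{v_i, v_{d−i}}` (for `0 ≤ i ≤ d`, `i ≠ d−i`) with
`Δ(v_i) = (t₁^{d−i}t₂^i, 0) ⊗ v_i + (0, u₁^{d−i}u₂^i) ⊗ v_{d−i}` and
`Δ(v_{d−i}) = (t₁^{i}t₂^{d−i}, 0) ⊗ v_{d−i} + (0, u₁^{i}u₂^{d−i}) ⊗ v_i`
has no nonzero vector `v` with `Δ(v) = f ⊗ v`; i.e. it has no 1-dimensional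
subcomodule, so it is irreducible. -/
theorem normalizer_summand_irreducible (k : Type) [Field k]
    (d i : ℕ) (hd : 1 ≤ d) (hi : i ≤ d) (hne : i ≠ d - i) :
    let R₁ := AddMonoidAlgebra k (ℤ × ℤ)
    let R := R₁ × R₁
    let s : ℕ → ℕ → R₁ := fun p q => AddMonoidAlgebra.single ((p : ℤ), (q : ℤ)) 1
    let Δvi : R ⊗[k] (k × k) :=
      ((s (d - i) i, 0) : R) ⊗ₜ[k] ((1 : k), (0 : k)) +
        ((0, s (d - i) i) : R) ⊗ₜ[k] ((0 : k), (1 : k))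
    let Δvdi : R ⊗[k] (k × k) :=
      ((s i (d - i), 0) : R) ⊗ₜ[k] ((0 : k), (1 : k)) +
        ((0, s i (d - i)) : R) ⊗ₜ[k] ((1 : k), (0 : k))
    ∀ (a₁ a₂ : k) (f : R),
      a₁ • Δvi + a₂ • Δvdi = f ⊗ₜ[k] ((a₁, a₂) : k × k) →
      a₁ = 0 ∧ a₂ = 0 := by
  intro R₁ R s Δvi Δvdi a₁ a₂ f h
  classical
  obtain ⟨f₁, f₂⟩ := f
  -- projection maps R ⊗ (k × k) → R given by a linear functional on k × k
  let φ : ((k × k) →ₗ[k] k) → (R ⊗[k] (k × k) →ₗ[k] R) := fun c =>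
    (TensorProduct.rid k R).toLinearMap ∘ₗ LinearMap.lTensor R c
  have h1 := congrArg (φ (LinearMap.fst k k k)) h
  have h2 := congrArg (φ (LinearMap.snd k k k)) h
  simp only [Δvi, Δvdi, φ, map_add, map_smul, LinearMap.coe_comp, Function.comp_apply,
    LinearMap.lTensor_tmul, LinearEquiv.coe_coe, TensorProduct.rid_tmul,
    LinearMap.fst_apply, LinearMap.snd_apply, one_smul, zero_smul, smul_zero,
    add_zero, zero_add] at h1 h2
  -- restate with explicit (non-let) types so simp can match
  have h1' : a₁ • ((AddMonoidAlgebra.single (((d - i : ℕ) : ℤ), (i : ℤ)) (1 : k), 0) :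
        R₁ × R₁) +
      a₂ • ((0, AddMonoidAlgebra.single ((i : ℤ), ((d - i : ℕ) : ℤ)) (1 : k)) :
        R₁ × R₁) =
      a₁ • ((f₁, f₂) : R₁ × R₁) := h1
  have h2' : a₁ • (((0, AddMonoidAlgebra.single (((d - i : ℕ) : ℤ), (i : ℤ)) (1 : k))) :
        R₁ × R₁) +
      a₂ • ((AddMonoidAlgebra.single ((i : ℤ), ((d - i : ℕ) : ℤ)) (1 : k), 0) :
        R₁ × R₁) =
      a₂ • ((f₁, f₂) : R₁ × R₁) := h2
  have h12 := congrArg Prod.snd h1'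
  have h22 := congrArg Prod.snd h2'
  simp only [Prod.snd_add, Prod.smul_snd, smul_zero, add_zero, zero_add] at h12 h22
  -- h12 : a₂ • single (i, j) 1 = a₁ • f₂ ; h22 : a₁ • single (j, i) 1 = a₂ • f₂
  have key : (a₁ * a₁) • AddMonoidAlgebra.single (((d - i : ℕ) : ℤ), (i : ℤ)) (1 : k)
      = (a₂ * a₂) • AddMonoidAlgebra.single ((i : ℤ), ((d - i : ℕ) : ℤ)) (1 : k) := by
    have e1 : (a₁ * a₁) • AddMonoidAlgebra.single (((d - i : ℕ) : ℤ), (i : ℤ)) (1 : k)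
        = (a₁ * a₂) • f₂ := by rw [mul_smul, h22, smul_smul]
    have e2 : (a₂ * a₂) • AddMonoidAlgebra.single ((i : ℤ), ((d - i : ℕ) : ℤ)) (1 : k)
        = (a₂ * a₁) • f₂ := by rw [mul_smul, h12, smul_smul]
    rw [e1, mul_comm a₁ a₂, ← e2]
  have hij : ((i : ℤ), ((d - i : ℕ) : ℤ)) ≠ (((d - i : ℕ) : ℤ), (i : ℤ)) := by
    intro hh
    have : (i : ℤ) = ((d - i : ℕ) : ℤ) := congrArg Prod.fst hh
    exact hne (by exact_mod_cast this)
  have key1 := DFunLike.congr_fun (congrArg AddMonoidAlgebra.coeff key) (((d - i : ℕ) : ℤ), (i : ℤ))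
  have key2 := DFunLike.congr_fun (congrArg AddMonoidAlgebra.coeff key) ((i : ℤ), ((d - i : ℕ) : ℤ))
  simp only [AddMonoidAlgebra.coeff_smul, AddMonoidAlgebra.coeff_single, Finsupp.smul_apply, Finsupp.single_eq_same, Finsupp.single_eq_of_ne hij,
    Finsupp.single_eq_of_ne (Ne.symm hij), smul_eq_mul, mul_one, mul_zero] at key1 key2
  exact ⟨mul_self_eq_zero.mp key1, mul_self_eq_zero.mp key2.symm⟩
end
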